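/- Let φ : K → L be a geometric and dense morphism of ⊗-triangulated categories and let Φ : Spc(L) → Spc(K) be the induced map, Φ(C) = ⋂ {H ⊗-thick in K : C ⊆ ⟨φ(H)⟩}. Then for every object a ∈ K one has Φ⁻¹(F(a)) = F(φ(a)), where F(a) = {B ∈ Spc(K) : B ⊆ ⟨a⟩} and F(φ(a)) = {C ∈ Spc(L) : C ⊆ ⟨φ(a)⟩}. -/

import Mathlib

namespace Balmer

open CategoryTheory CategoryTheory.Limits CategoryTheory.Pretriangulated ZeroObject

universe v u v' u'

variable {K : Type u} [Category.{v} K] [Preadditive K] [HasZeroObject K] [HasShift K ℤ]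
  [∀ n : ℤ, (shiftFunctor K n).Additive] [Pretriangulated K] [HasBinaryBiproducts K]

/-- A `⊗`-thick subcategory of `K` (identified with its set of objects):
a full triangulated subcategory, closed under isomorphisms, translations, cones and
direct summands, which is moreover an ideal for the tensor product on both sides. -/
def IsTensorThick (tensor : K ⥤ K ⥤ K) (S : Set K) : Prop :=
  (0 : K) ∈ S ∧
  (∀ ⦃a b : K⦄, (a ≅ b) → a ∈ S → b ∈ S) ∧
  (∀ a ∈ S, ∀ n : ℤ, (shiftFunctor K n).obj a ∈ S) ∧
  (∀ T ∈ (distTriang K), T.obj₁ ∈ S → T.obj₂ ∈ S → T.obj₃ ∈ S) ∧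
  (∀ a b : K, (a ⊞ b) ∈ S → a ∈ S ∧ b ∈ S) ∧
  (∀ a ∈ S, ∀ b : K, (tensor.obj a).obj b ∈ S ∧ (tensor.obj b).obj a ∈ S)

/-- `⟨D⟩`, the smallest `⊗`-thick subcategory of `K` containing `D`. -/
def tensorSpan (tensor : K ⥤ K ⥤ K) (D : Set K) : Set K :=
  ⋂₀ {S : Set K | IsTensorThick tensor S ∧ D ⊆ S}

/-- A `⊗`-thick subcategory `A` is atomic if whenever `A ⊆ ⟨D⟩` for a collection of
objects `D`, there is some `d ∈ D` with `A ⊆ ⟨d⟩`. -/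
def IsAtomic (tensor : K ⥤ K ⥤ K) (A : Set K) : Prop :=
  IsTensorThick tensor A ∧
    ∀ D : Set K, A ⊆ tensorSpan tensor D → ∃ d ∈ D, A ⊆ tensorSpan tensor {d}

/-- The spectrum `Spc(K,⊗)`: the collection of all nonzero atomic `⊗`-thick
subcategories of `K`. -/
def Spc (tensor : K ⥤ K ⥤ K) : Set (Set K) :=
  {A | IsAtomic tensor A ∧ ∃ a ∈ A, ¬ IsZero a}

variable {L : Type u'} [Category.{v'} L] [Preadditive L] [HasZeroObject L] [HasShift L ℤ]
  [∀ n : ℤ, (shiftFunctor L n).Additive] [Pretriangulated L] [HasBinaryBiproducts L]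

/-- A morphism `φ` of `⊗`-triangulated categories is geometric if `⟨φ(-)⟩`
commutes with arbitrary intersections of `⊗`-thick subcategories. -/
def IsGeometric (tensorK : K ⥤ K ⥤ K) (tensorL : L ⥤ L ⥤ L) (φ : K ⥤ L) : Prop :=
  ∀ 𝒞 : Set (Set K), (∀ C ∈ 𝒞, IsTensorThick tensorK C) →
    tensorSpan tensorL (φ.obj '' ⋂₀ 𝒞) = ⋂ C ∈ 𝒞, tensorSpan tensorL (φ.obj '' C)

/-- A morphism `φ` of `⊗`-triangulated categories is dense if `⟨φ(K)⟩ = L`. -/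
def IsDense (tensorL : L ⥤ L ⥤ L) (φ : K ⥤ L) : Prop :=
  tensorSpan tensorL (Set.range φ.obj) = Set.univ

/-- The map `Φ = Spc(φ)` underlying a geometric and dense morphism `φ`:
`Φ(C)` is the intersection of all `⊗`-thick subcategories `H ⊆ K` such that
`C ⊆ ⟨φ(H)⟩`. -/
def PhiMap (tensorK : K ⥤ K ⥤ K) (tensorL : L ⥤ L ⥤ L) (φ : K ⥤ L) (C : Set L) : Set K :=
  ⋂₀ {H : Set K | IsTensorThick tensorK H ∧ C ⊆ tensorSpan tensorL (φ.obj '' H)}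

/-!
Geometricity makes `Φ` the lower adjoint of `H ↦ ⟨φ(H)⟩`: applying it to the family defining
`Φ(C)` gives `C ⊆ ⟨φ(Φ(C))⟩`, hence `Φ(C) ⊆ H ↔ C ⊆ ⟨φ(H)⟩` for every `⊗`-thick `H`.
For `H = ⟨a⟩` the right-hand side is `C ⊆ ⟨φ(a)⟩`, because `⟨φ(⟨a⟩)⟩ = ⟨φ(a)⟩`: the preimage
of a `⊗`-thick subcategory under a `⊗`-functor is `⊗`-thick.
-/

section TensorSpan

variable (tensor : K ⥤ K ⥤ K)

lemma isTensorThick_sInter {𝒮 : Set (Set K)} (h : ∀ S ∈ 𝒮, IsTensorThick tensor S) :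
    IsTensorThick tensor (⋂₀ 𝒮) :=
  ⟨fun S hS => (h S hS).1, fun _ _ i ha S hS => (h S hS).2.1 i (ha S hS),
    fun a ha n S hS => (h S hS).2.2.1 a (ha S hS) n,
    fun T hT h1 h2 S hS => (h S hS).2.2.2.1 T hT (h1 S hS) (h2 S hS),
    fun a b hab => ⟨fun S hS => ((h S hS).2.2.2.2.1 a b (hab S hS)).1,
      fun S hS => ((h S hS).2.2.2.2.1 a b (hab S hS)).2⟩,
    fun a ha b => ⟨fun S hS => ((h S hS).2.2.2.2.2 a (ha S hS) b).1,
      fun S hS => ((h S hS).2.2.2.2.2 a (ha S hS) b).2⟩⟩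

lemma isTensorThick_tensorSpan (D : Set K) : IsTensorThick tensor (tensorSpan tensor D) :=
  isTensorThick_sInter tensor fun _ hS => hS.1

lemma subset_tensorSpan (D : Set K) : D ⊆ tensorSpan tensor D :=
  fun _ hx _ hS => hS.2 hx

lemma tensorSpan_subset_iff {D S : Set K} (hS : IsTensorThick tensor S) :
    tensorSpan tensor D ⊆ S ↔ D ⊆ S :=
  ⟨(subset_tensorSpan tensor D).trans, fun hD => Set.sInter_subset_of_mem ⟨hS, hD⟩⟩

lemma tensorSpan_mono {D E : Set K} (h : D ⊆ E) : tensorSpan tensor D ⊆ tensorSpan tensor E :=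
  (tensorSpan_subset_iff tensor (isTensorThick_tensorSpan tensor E)).2
    (h.trans (subset_tensorSpan tensor E))

end TensorSpan

section TensorFunctor

variable (tensorK : K ⥤ K ⥤ K) (tensorL : L ⥤ L ⥤ L) (φ : K ⥤ L)

lemma isTensorThick_preimage [φ.CommShift ℤ] [φ.IsTriangulated]
    (e : ∀ a b : K, φ.obj ((tensorK.obj a).obj b) ≅ (tensorL.obj (φ.obj a)).obj (φ.obj b))
    {S : Set L} (hS : IsTensorThick tensorL S) : IsTensorThick tensorK (φ.obj ⁻¹' S) := by
  obtain ⟨h0, hiso, hshift, htri, hsum, htens⟩ := hS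
  refine ⟨hiso φ.mapZeroObject.symm h0, fun a b i ha => hiso (φ.mapIso i) ha,
    fun a ha n => hiso ((φ.commShiftIso n).symm.app a) (hshift _ ha n),
    fun T hT h1 h2 => htri _ (φ.map_distinguished T hT) h1 h2, fun a b hab => ?_,
    fun a ha b => ⟨hiso (e a b).symm (htens _ ha (φ.obj b)).1,
      hiso (e b a).symm (htens _ ha (φ.obj b)).2⟩⟩
  have := preservesBinaryBiproduct_of_preservesBiproduct φ a b
  exact hsum _ _ (hiso (φ.mapBiprod a b) hab)

lemma tensorSpan_image_tensorSpan [φ.CommShift ℤ] [φ.IsTriangulated]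
    (e : ∀ a b : K, φ.obj ((tensorK.obj a).obj b) ≅ (tensorL.obj (φ.obj a)).obj (φ.obj b))
    (D : Set K) :
    tensorSpan tensorL (φ.obj '' tensorSpan tensorK D) = tensorSpan tensorL (φ.obj '' D) := by
  have hspan := isTensorThick_tensorSpan tensorL (φ.obj '' D)
  refine subset_antisymm ((tensorSpan_subset_iff tensorL hspan).2 ?_)
    (tensorSpan_mono tensorL (Set.image_mono (subset_tensorSpan tensorK D)))
  rw [Set.image_subset_iff, tensorSpan_subset_iff tensorK
    (isTensorThick_preimage tensorK tensorL φ e hspan), ← Set.image_subset_iff]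
  exact subset_tensorSpan tensorL _

variable {tensorK tensorL φ}

lemma subset_tensorSpan_image_phiMap (hgeo : IsGeometric tensorK tensorL φ) (C : Set L) :
    C ⊆ tensorSpan tensorL (φ.obj '' PhiMap tensorK tensorL φ C) := by
  rw [PhiMap, hgeo _ fun _ hH => hH.1]
  exact Set.subset_iInter₂ fun _ hH => hH.2

lemma phiMap_subset_iff (hgeo : IsGeometric tensorK tensorL φ) {C : Set L} {H : Set K}
    (hH : IsTensorThick tensorK H) :
    PhiMap tensorK tensorL φ C ⊆ H ↔ C ⊆ tensorSpan tensorL (φ.obj '' H) :=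
  ⟨fun hΦ => (subset_tensorSpan_image_phiMap hgeo C).trans
      (tensorSpan_mono tensorL (Set.image_mono hΦ)),
    fun hC => Set.sInter_subset_of_mem ⟨hH, hC⟩⟩

end TensorFunctor

/-- Lemma 4.9: `Φ⁻¹(F(a)) = F(φ(a))`, where
`F(a) = {B ∈ Spc(K) | B ⊆ ⟨a⟩}`. -/
theorem stmt9 (tensorK : K ⥤ K ⥤ K) (tensorL : L ⥤ L ⥤ L)
    [∀ a : K, (tensorK.obj a).CommShift ℤ] [∀ a : K, (tensorK.obj a).IsTriangulated]
    [∀ b : K, (tensorK.flip.obj b).CommShift ℤ] [∀ b : K, (tensorK.flip.obj b).IsTriangulated]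
    [∀ a : L, (tensorL.obj a).CommShift ℤ] [∀ a : L, (tensorL.obj a).IsTriangulated]
    [∀ b : L, (tensorL.flip.obj b).CommShift ℤ] [∀ b : L, (tensorL.flip.obj b).IsTriangulated]
    (φ : K ⥤ L) [φ.CommShift ℤ] [φ.IsTriangulated]
    (e : ∀ a b : K, φ.obj ((tensorK.obj a).obj b) ≅ (tensorL.obj (φ.obj a)).obj (φ.obj b))
    (hgeo : IsGeometric tensorK tensorL φ) (hdense : IsDense tensorL φ)
    (a : K) :
    {C ∈ Spc tensorL | PhiMap tensorK tensorL φ C ⊆ tensorSpan tensorK {a}} =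
      {C ∈ Spc tensorL | C ⊆ tensorSpan tensorL {φ.obj a}} := by
  ext C
  rw [Set.mem_sep_iff, Set.mem_sep_iff,
    phiMap_subset_iff hgeo (isTensorThick_tensorSpan tensorK {a}),
    tensorSpan_image_tensorSpan tensorK tensorL φ e, Set.image_singleton]

end Balmer
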